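/- arXiv:2601.19030 — 2 statements merged into one kernel-verified Lean document; each statement's English description precedes it below -/
import Mathlib

section
/- Fix a positive integer d and γ ∈ [0,1). Let Ω be a finite type with nonnegative weights p : Ω → ℝ summing to 1, let X, X' : Ω → ℝ^d, and write E[·] for the p-weighted average over Ω. Assume Σ := E[X·Xᵀ] is invertible, and set Σcr := E[X·(X')ᵀ], A := Σ − γ·Σcr, Bπ := (Σ⁻¹·Σcr)ᵀ. Assume: (i) there exists θ₀ ∈ ℝ^d with X(ω)ᵀθ₀ = 1 and X'(ω)ᵀθ₀ = 1 for every ω with p(ω) > 0; (ii) E[X] = E[X'] = φ₀; and (iii) every complex eigenvalue μ of Bπ satisfies γ·|μ| < 1. Then A is invertible and the feature-dynamics coverage satisfies (1−γ)²·φ₀ᵀ·A⁻¹·Σ·A⁻ᵀ·φ₀ ≤ 1. -/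
open Matrix MeasureTheory ProbabilityTheory
open scoped Classical

noncomputable section

/-- Euclidean norm of a vector in `ℝ^d`. -/
def norm2 {d : ℕ} (v : Fin d → ℝ) : ℝ := Real.sqrt (v ⬝ᵥ v)

/-- The positive semidefinite square root of a matrix (junk value `0` if not PSD). -/
def psdSqrt {d : ℕ} (M : Matrix (Fin d) (Fin d) ℝ) : Matrix (Fin d) (Fin d) ℝ :=
  if h : M.PosSemidef then
    (h.1.eigenvectorUnitary : Matrix (Fin d) (Fin d) ℝ) *
      diagonal ((↑) ∘ (√·) ∘ h.1.eigenvalues) *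
      (star h.1.eigenvectorUnitary : Matrix (Fin d) (Fin d) ℝ)
  else 0

/-- Largest eigenvalue of a symmetric matrix (junk value `0` if not symmetric). -/
def lamMax {d : ℕ} (M : Matrix (Fin d) (Fin d) ℝ) : ℝ :=
  if h : M.IsHermitian then ⨆ i, h.eigenvalues i else 0

/-- Smallest eigenvalue of a symmetric matrix (junk value `0` if not symmetric). -/
def lamMin {d : ℕ} (M : Matrix (Fin d) (Fin d) ℝ) : ℝ :=
  if h : M.IsHermitian then ⨅ i, h.eigenvalues i else 0

/-- Smallest singular value. -/
def sigmaMin {d : ℕ} (M : Matrix (Fin d) (Fin d) ℝ) : ℝ := Real.sqrt (lamMin (Mᵀ * M))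

/-- Largest singular value (operator norm). -/
def sigmaMax {d : ℕ} (M : Matrix (Fin d) (Fin d) ℝ) : ℝ := Real.sqrt (lamMax (Mᵀ * M))

/-- Empirical covariance matrix `(1/n) ∑ᵢ WᵢWᵢᵀ`. -/
def empSigma {d n : ℕ} (W : Fin n → Fin d → ℝ) : Matrix (Fin d) (Fin d) ℝ :=
  (n : ℝ)⁻¹ • ∑ i, vecMulVec (W i) (W i)

/-- Empirical LSTDQ matrix `(1/n) ∑ᵢ Wᵢ(Wᵢ - γWᵢ')ᵀ`. -/
def empA {d n : ℕ} (γ : ℝ) (W W' : Fin n → Fin d → ℝ) : Matrix (Fin d) (Fin d) ℝ :=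
  (n : ℝ)⁻¹ • ∑ i, vecMulVec (W i) (W i - γ • W' i)

/-- Empirical LSTDQ vector `(1/n) ∑ᵢ RᵢWᵢ`. -/
def empb {d n : ℕ} (W : Fin n → Fin d → ℝ) (R : Fin n → ℝ) : Fin d → ℝ :=
  (n : ℝ)⁻¹ • ∑ i, R i • W i

/-!
The bias vector `θ₀` is a common eigen-direction: since every feature has `θ₀`-coordinate `1`
on the support, `Σ θ₀ = E[X] = φ₀`, `Σcr θ₀ = E[X] = φ₀` and `Σcrᵀ θ₀ = E[X'] = φ₀`. Hence
`A θ₀ = Aᵀ θ₀ = (1 - γ) φ₀`, so `A⁻¹ φ₀ = A⁻ᵀ φ₀ = θ₀ / (1 - γ)` and the coverage equals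
`θ₀ᵀ Σ θ₀ = φ₀ᵀ θ₀ = 1`. Invertibility of `A` comes from `Aᵀ = (1 - γ Bπ) Σᵀ`, where
`1 - γ Bπ` is invertible because `1/γ` is not an eigenvalue of `Bπ`.
-/

section Moments

variable {n Ω R : Type*} [Fintype n] [CommSemiring R] {p : Ω → R} {Y Z : Ω → n → R} {θ : n → R}

theorem mul_dotProduct_eq_self_of_support (hZ : ∀ ω, p ω ≠ 0 → Z ω ⬝ᵥ θ = 1) (ω : Ω) :
    p ω * (Z ω ⬝ᵥ θ) = p ω := by
  by_cases h : p ω = 0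
  · rw [h, zero_mul]
  · rw [hZ ω h, mul_one]

theorem sum_smul_vecMulVec_mulVec_of_support [Fintype Ω] (hZ : ∀ ω, p ω ≠ 0 → Z ω ⬝ᵥ θ = 1) :
    (∑ ω, p ω • vecMulVec (Y ω) (Z ω)) *ᵥ θ = ∑ ω, p ω • Y ω := by
  rw [sum_mulVec]
  refine Finset.sum_congr rfl fun ω _ => ?_
  rw [smul_mulVec, vecMulVec_mulVec, op_smul_eq_smul, smul_smul,
    mul_dotProduct_eq_self_of_support hZ]

theorem sum_smul_dotProduct_of_support [Fintype Ω] (hY : ∀ ω, p ω ≠ 0 → Y ω ⬝ᵥ θ = 1) :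
    (∑ ω, p ω • Y ω) ⬝ᵥ θ = ∑ ω, p ω := by
  rw [sum_dotProduct]
  exact Finset.sum_congr rfl fun ω _ => by
    rw [smul_dotProduct, smul_eq_mul, mul_dotProduct_eq_self_of_support hY]

end Moments

section Invertibility

variable {n : Type*} [Fintype n] [DecidableEq n]

theorem mem_spectrum_map_of_mem_spectrum {K S : Type*} [Field K] [CommRing S] [Nontrivial S]
    (f : K →+* S) {M : Matrix n n K} {r : K} (hr : r ∈ spectrum K M) :
    f r ∈ spectrum S (M.map f) :=
  mem_spectrum_of_isRoot_charpoly <| by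
    rw [charpoly_map]
    exact (mem_spectrum_iff_isRoot_charpoly.mp hr).map

theorem isUnit_det_one_sub_smul_of_spectrum {B : Matrix n n ℝ} {γ : ℝ} (hγ : 0 ≤ γ)
    (hB : ∀ z ∈ spectrum ℂ (B.map Complex.ofReal), γ * ‖z‖ < 1) :
    IsUnit (1 - γ • B).det := by
  rw [← isUnit_iff_isUnit_det]
  rcases hγ.eq_or_lt with rfl | hγ
  · simp
  have hnot : γ⁻¹ ∉ spectrum ℝ B := fun hmem => by
    have := hB _ (mem_spectrum_map_of_mem_spectrum Complex.ofRealHom hmem)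
    simp [abs_of_pos hγ, mul_inv_cancel₀ hγ.ne'] at this
  have hfactor : 1 - γ • B = γ • (algebraMap ℝ _ γ⁻¹ - B) := by
    rw [smul_sub, Algebra.algebraMap_eq_smul_one, smul_smul, mul_inv_cancel₀ hγ.ne', one_smul]
  rw [hfactor]
  exact (isUnit_smul_iff (Units.mk0 γ hγ.ne') _).mpr (spectrum.notMem_iff.mp hnot)

theorem isUnit_det_sub_smul_of_spectrum {S C : Matrix n n ℝ} {γ : ℝ} (hS : IsUnit S.det)
    (hγ : 0 ≤ γ) (hspec : ∀ z ∈ spectrum ℂ ((S⁻¹ * C)ᵀ.map Complex.ofReal), γ * ‖z‖ < 1) :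
    IsUnit (S - γ • C).det := by
  have hfactor : (S - γ • C)ᵀ = (1 - γ • (S⁻¹ * C)ᵀ) * Sᵀ := by
    rw [sub_mul, one_mul, smul_mul_assoc, ← transpose_mul, ← Matrix.mul_assoc,
      mul_nonsing_inv S hS, Matrix.one_mul, transpose_sub, transpose_smul]
  rw [← det_transpose, hfactor, det_mul, det_transpose]
  exact (isUnit_det_one_sub_smul_of_spectrum hγ hspec).mul hS

theorem inv_mulVec_eq_inv_smul_of_mulVec_eq_smul {K : Type*} [Field K] {A : Matrix n n K}
    {x y : n → K} {c : K} (hA : IsUnit A.det) (hc : c ≠ 0) (hxy : A *ᵥ x = c • y) :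
    A⁻¹ *ᵥ y = c⁻¹ • x := by
  rw [← inv_smul_smul₀ hc y, mulVec_smul, ← hxy, mulVec_mulVec, nonsing_inv_mul A hA, one_mulVec]

end Invertibility

theorem sq_mul_dotProduct_inv_mulVec_eq_one {n K : Type*} [Fintype n] [DecidableEq n] [Field K]
    {A S : Matrix n n K} {φ θ : n → K} {c : K} (hA : IsUnit A.det) (hc : c ≠ 0)
    (hAθ : A *ᵥ θ = c • φ) (hAtθ : Aᵀ *ᵥ θ = c • φ) (hSθ : S *ᵥ θ = φ) (hφθ : φ ⬝ᵥ θ = 1) :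
    c ^ 2 * (φ ⬝ᵥ (A⁻¹ *ᵥ (S *ᵥ (A⁻¹ᵀ *ᵥ φ)))) = 1 := by
  have hAt : IsUnit Aᵀ.det := by rwa [det_transpose]
  rw [transpose_nonsing_inv, inv_mulVec_eq_inv_smul_of_mulVec_eq_smul hAt hc hAtθ, mulVec_smul,
    hSθ, mulVec_smul, inv_mulVec_eq_inv_smul_of_mulVec_eq_smul hA hc hAθ, dotProduct_smul,
    dotProduct_smul, hφθ, smul_eq_mul, smul_eq_mul]
  field_simp

theorem stmt5_general (d : ℕ) (γ : ℝ) (hγ0 : 0 ≤ γ) (hγ1 : γ < 1)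
    (Ω : Type) [Fintype Ω] (p : Ω → ℝ) (hp : ∀ ω, 0 ≤ p ω) (hpsum : ∑ ω, p ω = 1)
    (X X' : Ω → Fin d → ℝ) (φ₀ : Fin d → ℝ)
    (Sig Sigcr A Bpi : Matrix (Fin d) (Fin d) ℝ)
    (hSigdef : Sig = ∑ ω, p ω • vecMulVec (X ω) (X ω))
    (hSiginv : IsUnit Sig.det)
    (hSigcr : Sigcr = ∑ ω, p ω • vecMulVec (X ω) (X' ω))
    (hA : A = Sig - γ • Sigcr) (hB : Bpi = (Sig⁻¹ * Sigcr)ᵀ)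
    (θ₀ : Fin d → ℝ)
    (hbias : ∀ ω, 0 < p ω → X ω ⬝ᵥ θ₀ = 1 ∧ X' ω ⬝ᵥ θ₀ = 1)
    (hmeanX : ∑ ω, p ω • X ω = φ₀) (hmeanX' : ∑ ω, p ω • X' ω = φ₀)
    (hspec : ∀ z ∈ spectrum ℂ (Bpi.map (Complex.ofReal : ℝ → ℂ)), γ * ‖z‖ < 1) :
    IsUnit A.det ∧
      (1 - γ) ^ 2 * (φ₀ ⬝ᵥ (A⁻¹ *ᵥ (Sig *ᵥ ((A⁻¹)ᵀ *ᵥ φ₀)))) ≤ 1 := by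
  have hX (ω : Ω) (hω : p ω ≠ 0) : X ω ⬝ᵥ θ₀ = 1 := (hbias ω ((hp ω).lt_of_ne' hω)).1
  have hX' (ω : Ω) (hω : p ω ≠ 0) : X' ω ⬝ᵥ θ₀ = 1 := (hbias ω ((hp ω).lt_of_ne' hω)).2
  have hTranspose (Y Z : Ω → Fin d → ℝ) :
      (∑ ω, p ω • vecMulVec (Y ω) (Z ω))ᵀ = ∑ ω, p ω • vecMulVec (Z ω) (Y ω) := by
    simp only [transpose_sum, transpose_smul, transpose_vecMulVec]
  have hSigθ : Sig *ᵥ θ₀ = φ₀ := by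
    rw [hSigdef, sum_smul_vecMulVec_mulVec_of_support hX, hmeanX]
  have hSigtθ : Sigᵀ *ᵥ θ₀ = φ₀ := by
    rw [hSigdef, hTranspose, sum_smul_vecMulVec_mulVec_of_support hX, hmeanX]
  have hSigcrθ : Sigcr *ᵥ θ₀ = φ₀ := by
    rw [hSigcr, sum_smul_vecMulVec_mulVec_of_support hX', hmeanX]
  have hSigcrtθ : Sigcrᵀ *ᵥ θ₀ = φ₀ := by
    rw [hSigcr, hTranspose, sum_smul_vecMulVec_mulVec_of_support hX, hmeanX']
  have hφθ : φ₀ ⬝ᵥ θ₀ = 1 := by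
    rw [← hmeanX, sum_smul_dotProduct_of_support hX, hpsum]
  have hAunit : IsUnit A.det :=
    hA ▸ isUnit_det_sub_smul_of_spectrum hSiginv hγ0 (hB ▸ hspec)
  have hAθ : A *ᵥ θ₀ = (1 - γ) • φ₀ := by
    rw [hA, sub_mulVec, smul_mulVec, hSigθ, hSigcrθ, sub_smul, one_smul]
  have hAtθ : Aᵀ *ᵥ θ₀ = (1 - γ) • φ₀ := by
    rw [hA, transpose_sub, transpose_smul, sub_mulVec, smul_mulVec, hSigtθ, hSigcrtθ, sub_smul,
      one_smul]
  exact ⟨hAunit, (sq_mul_dotProduct_inv_mulVec_eq_one hAunit (sub_ne_zero.mpr hγ1.ne') hAθ hAtθ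
    hSigθ hφθ).le⟩

/-- Proposition 5.2 of the paper: under a bias feature, the mean on-policy
condition, and the spectral-radius condition, the feature-dynamics coverage is at most `1`. -/
theorem stmt5 (d : ℕ) (hd : 0 < d) (γ : ℝ) (hγ0 : 0 ≤ γ) (hγ1 : γ < 1)
    (Ω : Type) [Fintype Ω] (p : Ω → ℝ) (hp : ∀ ω, 0 ≤ p ω) (hpsum : ∑ ω, p ω = 1)
    (X X' : Ω → Fin d → ℝ) (φ₀ : Fin d → ℝ)
    (Sig Sigcr A Bpi : Matrix (Fin d) (Fin d) ℝ)
    (hSigdef : Sig = ∑ ω, p ω • vecMulVec (X ω) (X ω))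
    (hSiginv : IsUnit Sig.det)
    (hSigcr : Sigcr = ∑ ω, p ω • vecMulVec (X ω) (X' ω))
    (hA : A = Sig - γ • Sigcr) (hB : Bpi = (Sig⁻¹ * Sigcr)ᵀ)
    (θ₀ : Fin d → ℝ)
    (hbias : ∀ ω, 0 < p ω → X ω ⬝ᵥ θ₀ = 1 ∧ X' ω ⬝ᵥ θ₀ = 1)
    (hmeanX : ∑ ω, p ω • X ω = φ₀) (hmeanX' : ∑ ω, p ω • X' ω = φ₀)
    (hspec : ∀ z ∈ spectrum ℂ (Bpi.map (Complex.ofReal : ℝ → ℂ)), γ * ‖z‖ < 1) :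
    IsUnit A.det ∧
      (1 - γ) ^ 2 * (φ₀ ⬝ᵥ (A⁻¹ *ᵥ (Sig *ᵥ ((A⁻¹)ᵀ *ᵥ φ₀)))) ≤ 1 :=
  stmt5_general d γ hγ0 hγ1 Ω p hp hpsum X X' φ₀ Sig Sigcr A Bpi hSigdef hSiginv hSigcr hA hB θ₀
    hbias hmeanX hmeanX' hspec
end
end

section
/- Let d be a positive integer and I a finite index set with nonnegative weights ν : I → ℝ summing to 1. Let φᵢ ∈ ℝ^d for i ∈ I, let Â be an invertible d×d real matrix, Σ̂ a d×d symmetric positive definite matrix, b̂ ∈ ℝ^d, θ̂ := Â⁻¹·b̂, and θ* ∈ ℝ^d arbitrary. Then Σᵢ ν(i)·(φᵢᵀ(θ* − θ̂))² ≤ (Σᵢ ν(i)·‖Σ̂^{1/2}·Â⁻ᵀ·φᵢ‖₂²) · ‖Σ̂^{−1/2}·(Â·θ* − b̂)‖₂². -/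
open Matrix MeasureTheory ProbabilityTheory
open scoped Classical

noncomputable section

/-
With `r := Âθ* − b̂` we have `θ* − θ̂ = Â⁻¹r`, so for `S := Σ̂^{1/2}` (symmetric and invertible)
`φᵢᵀ(θ* − θ̂) = (S Â⁻ᵀ φᵢ) ⬝ (S⁻¹ r)`. Cauchy–Schwarz for each `i` and summation against the
nonnegative weights `ν` give the bound.
-/

lemma norm2_sq {d : ℕ} (v : Fin d → ℝ) : norm2 v ^ 2 = v ⬝ᵥ v :=
  Real.sq_sqrt (Finset.sum_nonneg fun i _ => mul_self_nonneg (v i))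

lemma sq_dotProduct_le_norm2_sq_mul_norm2_sq {d : ℕ} (v w : Fin d → ℝ) :
    (v ⬝ᵥ w) ^ 2 ≤ norm2 v ^ 2 * norm2 w ^ 2 := by
  rw [norm2_sq, norm2_sq]
  simpa only [dotProduct, pow_two] using Finset.sum_mul_sq_le_sq_mul_sq Finset.univ v w

lemma sum_mul_sq_dotProduct_le {d : ℕ} {ι : Type*} [Fintype ι] (ν : ι → ℝ) (hν : ∀ i, 0 ≤ ν i)
    (u : ι → Fin d → ℝ) (y : Fin d → ℝ) :
    ∑ i, ν i * (u i ⬝ᵥ y) ^ 2 ≤ (∑ i, ν i * norm2 (u i) ^ 2) * norm2 y ^ 2 := by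
  rw [Finset.sum_mul]
  refine Finset.sum_le_sum fun i _ => ?_
  rw [mul_assoc]
  exact mul_le_mul_of_nonneg_left (sq_dotProduct_le_norm2_sq_mul_norm2_sq _ _) (hν i)

lemma Matrix.dotProduct_eq_transpose_mulVec_dotProduct_inv_mulVec {n α : Type*} [Fintype n]
    [DecidableEq n] [CommRing α] {M : Matrix n n α} (hM : IsUnit M.det) (x y : n → α) :
    x ⬝ᵥ y = (Mᵀ *ᵥ x) ⬝ᵥ (M⁻¹ *ᵥ y) := by
  rw [mulVec_transpose, ← dotProduct_mulVec, mulVec_mulVec, mul_nonsing_inv _ hM, one_mulVec]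

section psdSqrt

variable {d : ℕ} {M : Matrix (Fin d) (Fin d) ℝ}

lemma psdSqrt_eq_cfc_sqrt (hM : M.PosSemidef) : psdSqrt M = cfc Real.sqrt M := by
  rw [psdSqrt, dif_pos hM, hM.1.cfc_eq, IsHermitian.cfc, Unitary.conjStarAlgAut_apply]
  rfl

lemma transpose_psdSqrt (hM : M.PosSemidef) : (psdSqrt M)ᵀ = psdSqrt M := by
  have : (psdSqrt M).IsHermitian := psdSqrt_eq_cfc_sqrt hM ▸ cfc_predicate Real.sqrt M
  rwa [IsHermitian, conjTranspose_eq_transpose_of_trivial] at this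

lemma psdSqrt_mul_self (hM : M.PosSemidef) : psdSqrt M * psdSqrt M = M := by
  rw [psdSqrt_eq_cfc_sqrt hM, ← cfc_mul Real.sqrt Real.sqrt M]
  conv_rhs => rw [← cfc_id' ℝ M hM.1.isSelfAdjoint]
  refine cfc_congr fun x hx => ?_
  rw [hM.1.spectrum_real_eq_range_eigenvalues] at hx
  obtain ⟨i, rfl⟩ := hx
  exact Real.mul_self_sqrt (hM.eigenvalues_nonneg i)

lemma isUnit_det_psdSqrt (hM : M.PosDef) : IsUnit (psdSqrt M).det := by
  have hsq : (psdSqrt M).det * (psdSqrt M).det = M.det := by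
    rw [← det_mul, psdSqrt_mul_self hM.posSemidef]
  exact isUnit_iff_ne_zero.2 fun h => hM.det_pos.ne' (by rw [← hsq, h, zero_mul])

end psdSqrt

theorem stmt14_general (d : ℕ) (I : Type) [Fintype I] (ν : I → ℝ)
    (hν : ∀ i, 0 ≤ ν i) (φ : I → Fin d → ℝ)
    (Ahat Sighat : Matrix (Fin d) (Fin d) ℝ) (hA : IsUnit Ahat.det) (hSig : Sighat.PosDef)
    (bhat θstar θhat : Fin d → ℝ) (hθ : θhat = Ahat⁻¹ *ᵥ bhat) :
    ∑ i, ν i * (φ i ⬝ᵥ (θstar - θhat)) ^ 2 ≤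
      (∑ i, ν i * norm2 (psdSqrt Sighat *ᵥ ((Ahat⁻¹)ᵀ *ᵥ φ i)) ^ 2) *
        norm2 ((psdSqrt Sighat)⁻¹ *ᵥ (Ahat *ᵥ θstar - bhat)) ^ 2 := by
  have hres : θstar - θhat = Ahat⁻¹ *ᵥ (Ahat *ᵥ θstar - bhat) := by
    rw [hθ, mulVec_sub, mulVec_mulVec, nonsing_inv_mul _ hA, one_mulVec]
  have hwhiten : ∀ i, φ i ⬝ᵥ (θstar - θhat) =
      (psdSqrt Sighat *ᵥ ((Ahat⁻¹)ᵀ *ᵥ φ i)) ⬝ᵥ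
        ((psdSqrt Sighat)⁻¹ *ᵥ (Ahat *ᵥ θstar - bhat)) := fun i => by
    rw [hres, dotProduct_mulVec, ← mulVec_transpose,
      dotProduct_eq_transpose_mulVec_dotProduct_inv_mulVec (isUnit_det_psdSqrt hSig),
      transpose_psdSqrt hSig.posSemidef]
  simp_rw [hwhiten]
  exact sum_mul_sq_dotProduct_le ν hν _ _

/-- deterministic core of the function-estimation guarantee,
Theorem D.1 of the paper. -/
theorem stmt14 (d : ℕ) (hd : 0 < d) (I : Type) [Fintype I] (ν : I → ℝ)
    (hν : ∀ i, 0 ≤ ν i) (hνsum : ∑ i, ν i = 1) (φ : I → Fin d → ℝ)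
    (Ahat Sighat : Matrix (Fin d) (Fin d) ℝ) (hA : IsUnit Ahat.det) (hSig : Sighat.PosDef)
    (bhat θstar θhat : Fin d → ℝ) (hθ : θhat = Ahat⁻¹ *ᵥ bhat) :
    ∑ i, ν i * (φ i ⬝ᵥ (θstar - θhat)) ^ 2 ≤
      (∑ i, ν i * norm2 (psdSqrt Sighat *ᵥ ((Ahat⁻¹)ᵀ *ᵥ φ i)) ^ 2) *
        norm2 ((psdSqrt Sighat)⁻¹ *ᵥ (Ahat *ᵥ θstar - bhat)) ^ 2 :=
  stmt14_general d I ν hν φ Ahat Sighat hA hSig bhat θstar θhat hθ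

end
end
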